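/- arXiv:1702.03390 — 4 statements merged into one kernel-verified Lean document; each statement's English description precedes it below -/
import Mathlib

section
/- The k-dominance relation is not transitive in general: there exist d, k with d/2 < k < d and three objects u, v, w in R^d such that u k-dominates v, v k-dominates w, and w k-dominates u. -/
/-- `x` k-dominates `y`: `x ≤ y` on at least `k` coordinates and `x < y` somewhere. -/
def kdom (d k : ℕ) (x y : Fin d → ℝ) : Prop :=
  ∃ S : Finset (Fin d), k ≤ S.card ∧ (∀ i ∈ S, x i ≤ y i) ∧ ∃ j, x j < y j

/-!
The cyclic shifts `x_m i = (i + m) mod (n + 1)` of `(0, 1, …, n)` form an `(n+1)`-cycle for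
`n`-dominance: passing from `x_m` to `x_{m+1}` raises every coordinate by one, except the single
coordinate where `x_m` is maximal, which wraps around to `0`. For `n = 2` this is the cycle
`(0,1,2) ≻₂ (1,2,0) ≻₂ (2,0,1) ≻₂ (0,1,2)`.
-/

def cyclicShift {n : ℕ} (m : Fin (n + 1)) (i : Fin (n + 1)) : ℝ := ((i + m : Fin (n + 1)) : ℕ)

lemma cyclicShift_add_one_apply {n : ℕ} {m i : Fin (n + 1)} (h : i + m ≠ Fin.last n) :
    cyclicShift (m + 1) i = cyclicShift m i + 1 := by
  simp only [cyclicShift, ← add_assoc, Fin.val_add_one_of_lt (Fin.lt_last_iff_ne_last.2 h)]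
  push_cast
  rfl

lemma kdom_cyclicShift_add_one {n : ℕ} (hn : 0 < n) (m : Fin (n + 1)) :
    kdom (n + 1) n (cyclicShift m) (cyclicShift (m + 1)) := by
  set S : Finset (Fin (n + 1)) := Finset.univ.erase (Fin.last n - m)
  have hS : S.card = n := by simp [S, Finset.card_erase_of_mem]
  have hlt : ∀ i ∈ S, cyclicShift m i < cyclicShift (m + 1) i := by
    intro i hi
    have hi' : i + m ≠ Fin.last n := fun h => (Finset.mem_erase.1 hi).1 (eq_sub_of_add_eq h)
    rw [cyclicShift_add_one_apply hi']
    exact lt_add_one _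
  obtain ⟨j, hj⟩ : S.Nonempty := Finset.card_pos.1 (hS.symm ▸ hn)
  exact ⟨S, hS.ge, fun i hi => (hlt i hi).le, j, hlt j hj⟩

/-- The `k`-dominance relation can be cyclic (hence is not transitive in general):
there are `d`, `k` with `d/2 < k < d` and objects `u, v, w` with
`u ≻ₖ v ≻ₖ w ≻ₖ u`. -/
theorem kdom_not_transitive :
    ∃ (d k : ℕ) (u v w : Fin d → ℝ), d / 2 < k ∧ k < d ∧
      kdom d k u v ∧ kdom d k v w ∧ kdom d k w u := by
  have hcycle : cyclicShift (2 + 1 : Fin 3) = cyclicShift 0 := by congr 1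
  refine ⟨3, 2, cyclicShift 0, cyclicShift 1, cyclicShift 2, by norm_num, by norm_num,
    kdom_cyclicShift_add_one two_pos 0, kdom_cyclicShift_add_one two_pos 1, ?_⟩
  simpa [hcycle] using kdom_cyclicShift_add_one two_pos 2
end

section
/- Separated-attribute join, Theorem (NN pruning): if u' ∈ R1 is k1-dominated by some tuple u in the same join group of R1, then for every v' ∈ R2 join-compatible with u', the joined tuple (u', v') is k-dominated (k = k1 + k2) by the joined tuple (u, v'), where (u, v') dominates (u', v') in at least k1 attributes from R1 and is equal on all d2 ≥ k2 attributes from R2. Hence (u', v') is not a k-dominant skyline of the joined relation. -/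
/-- NN pruning in the separated-attribute join: if `u' ∈ R1` is `k1`-dominated by
some tuple `u` in the same join group, then for every join-compatible `v' ∈ R2`,
the joined tuple `(u, v')` `(k1 + k2)`-dominates `(u', v')` (it dominates in at
least `k1` attributes from `R1` and is equal on all `d2 ≥ k2` attributes from
`R2`); hence `(u', v')` is not a `(k1+k2)`-dominant skyline of the joined
relation. -/
theorem nn_pruning_separated {G : Type*} (d1 d2 k1 k2 : ℕ) (hk2 : k2 ≤ d2)
    (R1 : Finset ((Fin d1 → ℝ) × G)) (R2 : Finset ((Fin d2 → ℝ) × G))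
    (u u' : (Fin d1 → ℝ) × G) (hu : u ∈ R1) (hu' : u' ∈ R1)
    (hgrp : u.2 = u'.2) (hdom : kdom d1 k1 u.1 u'.1) :
    ∀ v' ∈ R2, u'.2 = v'.2 →
      kdom (d1 + d2) (k1 + k2) (Fin.append u.1 v'.1) (Fin.append u'.1 v'.1) ∧
      ¬ (∀ w ∈ R1, ∀ z ∈ R2, w.2 = z.2 →
          ¬ kdom (d1 + d2) (k1 + k2) (Fin.append w.1 z.1) (Fin.append u'.1 v'.1)) := by
  intro v' hv' hgrp2
  obtain ⟨S, hScard, hSle, j, hj⟩ := hdom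
  have hmain : kdom (d1 + d2) (k1 + k2)
      (Fin.append u.1 v'.1) (Fin.append u'.1 v'.1) := by
    refine ⟨S.image (Fin.castAdd d2) ∪ Finset.univ.image (Fin.natAdd d1), ?_, ?_, ?_⟩
    · rw [Finset.card_union_of_disjoint]
      · rw [Finset.card_image_of_injective _ (Fin.castAdd_injective _ _),
          Finset.card_image_of_injective _ (fun a b h => Fin.ext (by have := congrArg Fin.val h; simp [Fin.natAdd] at this; omega)),
          Finset.card_univ, Fintype.card_fin]
        exact Nat.add_le_add hScard hk2
      · simp only [Finset.disjoint_left, Finset.mem_image, Finset.mem_univ, true_and]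
        rintro a ⟨i, hi, rfl⟩ ⟨i', hi'⟩
        exact absurd (congrArg Fin.val hi')
          (by simp [Fin.castAdd, Fin.natAdd]; omega)
    · intro i hi
      simp only [Finset.mem_union, Finset.mem_image, Finset.mem_univ, true_and] at hi
      rcases hi with ⟨a, ha, rfl⟩ | ⟨a, rfl⟩
      · simpa [Fin.append_left] using hSle a ha
      · simp [Fin.append_right]
    · exact ⟨Fin.castAdd d2 j, by simpa [Fin.append_left] using hj⟩
  refine ⟨hmain, fun h => h u hu v' hv' (hgrp.trans hgrp2) hmain⟩
end

section
/- Theorem (NN pruning in the general join): Let k1' = k − d2. If u' ∈ R1 is k1'-dominated by some tuple u in the same join group, then for any join-compatible v' ∈ R2, the joined tuple (u, v') k-dominates (u', v'): it dominates in at least k1' attributes from R1 and is equal on all d2 attributes from R2, totaling at least k1' + d2 = k attributes, with strict preference on at least one. Hence (u', v') is not a k-dominant skyline of R1 ⋈ R2. -/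
/-!
Appending the same `R2`-tuple `v'` to both `u` and `u'` adds `d2` attributes on which the two
joined tuples tie, so a `(k - d2)`-domination of `u'` by `u` becomes a domination on at least
`(k - d2) + d2 ≥ k` attributes of the join, and the strict attribute of `u` stays strict.
-/

theorem kdom.mono {d k k' : ℕ} {x y : Fin d → ℝ} (hk : k' ≤ k) (h : kdom d k x y) :
    kdom d k' x y := by
  obtain ⟨S, hcard, hle, hlt⟩ := h
  exact ⟨S, hk.trans hcard, hle, hlt⟩

theorem kdom.append_of_le {d1 d2 k : ℕ} {x y : Fin d1 → ℝ} {z w : Fin d2 → ℝ}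
    (h : kdom d1 k x y) (hzw : z ≤ w) :
    kdom (d1 + d2) (k + d2) (Fin.append x z) (Fin.append y w) := by
  obtain ⟨S, hcard, hle, j, hj⟩ := h
  refine ⟨(S.disjSum Finset.univ).map finSumFinEquiv.toEmbedding, ?_, ?_,
    Fin.castAdd d2 j, by simpa only [Fin.append_left] using hj⟩
  · rw [Finset.card_map, Finset.card_disjSum, Finset.card_univ, Fintype.card_fin]
    omega
  · simp only [Finset.mem_map, Equiv.coe_toEmbedding]
    rintro _ ⟨(i | i), hi, rfl⟩
    · simpa only [finSumFinEquiv_apply_left, Fin.append_left] using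
        hle i (Finset.inl_mem_disjSum.mp hi)
    · simpa only [finSumFinEquiv_apply_right, Fin.append_right] using hzw i

theorem kdom.append_same_right {d1 d2 k : ℕ} {x y : Fin d1 → ℝ} (z : Fin d2 → ℝ)
    (h : kdom d1 (k - d2) x y) : kdom (d1 + d2) k (Fin.append x z) (Fin.append y z) :=
  (h.append_of_le le_rfl).mono (by omega)

theorem nn_pruning_general_general {G : Type*} (d1 d2 k : ℕ)
    (R1 : Finset ((Fin d1 → ℝ) × G)) (R2 : Finset ((Fin d2 → ℝ) × G))
    (u u' : (Fin d1 → ℝ) × G) (hu : u ∈ R1)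
    (hgrp : u.2 = u'.2) (hdom : kdom d1 (k - d2) u.1 u'.1) :
    ∀ v' ∈ R2, u'.2 = v'.2 →
      kdom (d1 + d2) k (Fin.append u.1 v'.1) (Fin.append u'.1 v'.1) ∧
      ¬ (∀ w ∈ R1, ∀ z ∈ R2, w.2 = z.2 →
          ¬ kdom (d1 + d2) k (Fin.append w.1 z.1) (Fin.append u'.1 v'.1)) := by
  intro v' hv' hjoin
  have hkdom := hdom.append_same_right v'.1
  exact ⟨hkdom, fun hskyline => hskyline u hu v' hv' (hgrp.trans hjoin) hkdom⟩

/-- NN pruning in the general join: with `k1' = k - d2` and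
`max{d1,d2} < k < d1 + d2`, if `u' ∈ R1` is `k1'`-dominated by some `u` in the
same join group, then for any join-compatible `v' ∈ R2`, the joined tuple
`(u, v')` `k`-dominates `(u', v')`; hence `(u', v')` is not a `k`-dominant
skyline of `R1 ⋈ R2`. -/
theorem nn_pruning_general {G : Type*} (d1 d2 k : ℕ)
    (hmax : max d1 d2 < k) (hlt : k < d1 + d2)
    (R1 : Finset ((Fin d1 → ℝ) × G)) (R2 : Finset ((Fin d2 → ℝ) × G))
    (u u' : (Fin d1 → ℝ) × G) (hu : u ∈ R1) (hu' : u' ∈ R1)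
    (hgrp : u.2 = u'.2) (hdom : kdom d1 (k - d2) u.1 u'.1) :
    ∀ v' ∈ R2, u'.2 = v'.2 →
      kdom (d1 + d2) k (Fin.append u.1 v'.1) (Fin.append u'.1 v'.1) ∧
      ¬ (∀ w ∈ R1, ∀ z ∈ R2, w.2 = z.2 →
          ¬ kdom (d1 + d2) k (Fin.append w.1 z.1) (Fin.append u'.1 v'.1)) :=
  nn_pruning_general_general d1 d2 k R1 R2 u u' hu hgrp hdom
end

section
/- Theorem (UVP case for SS ⋈ SN): Assume R1 satisfies the unique value property with respect to k1' = k − d2: no two distinct tuples of R1 agree on any k1'-sized subset of attributes. If u' ∈ R1 is not k1'-dominated by any tuple of R1 (u' ∈ SS1) and v' ∈ R2 is not k2'-dominated by any tuple in its own join group (v' ∈ SS2 ∪ SN2), then the joined tuple (u', v') is a k-dominant skyline of R1 ⋈ R2. -/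
/-- UVP case for SS ⋈ SN: if `R1` satisfies the unique value property with
respect to `k1' = k - d2` (no two distinct tuples agree on any `k1'`-sized
subset of attributes), `u' ∈ R1` is not `k1'`-dominated by any tuple of `R1`,
and `v' ∈ R2` is not `k2'`-dominated (`k2' = k - d1`) by any tuple in its own
join group, then the joined tuple `(u', v')` is a `k`-dominant skyline of
`R1 ⋈ R2`. -/
theorem uvp_ss_join_sn {G : Type*} (d1 d2 k : ℕ)
    (hmax : max d1 d2 < k) (hlt : k < d1 + d2)
    (R1 : Finset ((Fin d1 → ℝ) × G)) (R2 : Finset ((Fin d2 → ℝ) × G))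
    (hUVP : ∀ u ∈ R1, ∀ w ∈ R1, u ≠ w →
      ∀ S : Finset (Fin d1), S.card = k - d2 → ∃ i ∈ S, u.1 i ≠ w.1 i)
    (u' : (Fin d1 → ℝ) × G) (hu' : u' ∈ R1)
    (v' : (Fin d2 → ℝ) × G) (hv' : v' ∈ R2) (hjoin : u'.2 = v'.2)
    (hSS1 : ∀ u ∈ R1, ¬ kdom d1 (k - d2) u.1 u'.1)
    (hSN2 : ∀ v ∈ R2, v.2 = v'.2 → ¬ kdom d2 (k - d1) v.1 v'.1) :
    ∀ u ∈ R1, ∀ v ∈ R2, u.2 = v.2 →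
      ¬ kdom (d1 + d2) k (Fin.append u.1 v.1) (Fin.append u'.1 v'.1) := by
  intro u hu v hv huv hk
  obtain ⟨S, hScard, hSle, j, hj⟩ := hk
  set S1 : Finset (Fin d1) := Finset.univ.filter (fun i => Fin.castAdd d2 i ∈ S) with hS1def
  set S2 : Finset (Fin d2) := Finset.univ.filter (fun i => Fin.natAdd d1 i ∈ S) with hS2def
  have hinj1 : Function.Injective (fun i : Fin d1 => Fin.castAdd d2 i) := fun a b h => by
    simpa [Fin.ext_iff] using h
  have hinj2 : Function.Injective (fun i : Fin d2 => Fin.natAdd d1 i) := fun a b h => by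
    simpa [Fin.ext_iff] using h
  have hsub : S ⊆ S1.map ⟨_, hinj1⟩ ∪ S2.map ⟨_, hinj2⟩ := by
    intro x hx
    refine Fin.addCases (motive := fun x => x ∈ S →
        x ∈ S1.map ⟨_, hinj1⟩ ∪ S2.map ⟨_, hinj2⟩) ?_ ?_ x hx
    · intro i hi
      exact Finset.mem_union_left _ (Finset.mem_map_of_mem _ (by simp [hS1def, hi]))
    · intro i hi
      exact Finset.mem_union_right _ (Finset.mem_map_of_mem _ (by simp [hS2def, hi]))
  have hcard : S.card ≤ S1.card + S2.card := by
    calc S.card ≤ (S1.map ⟨_, hinj1⟩ ∪ S2.map ⟨_, hinj2⟩).card := Finset.card_le_card hsub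
    _ ≤ (S1.map ⟨_, hinj1⟩).card + (S2.map ⟨_, hinj2⟩).card := Finset.card_union_le _ _
    _ = S1.card + S2.card := by simp
  have hS2le : S2.card ≤ d2 := (Finset.card_le_univ _).trans (by simp)
  have hS1le : S1.card ≤ d1 := (Finset.card_le_univ _).trans (by simp)
  have hS1card : k - d2 ≤ S1.card := by omega
  have hS2card : k - d1 ≤ S2.card := by omega
  have hS1mono : ∀ i ∈ S1, u.1 i ≤ u'.1 i := by
    intro i hi
    have := hSle _ (by simpa [hS1def] using hi)
    simpa [Fin.append_left] using this
  have hS2mono : ∀ i ∈ S2, v.1 i ≤ v'.1 i := by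
    intro i hi
    have := hSle _ (by simpa [hS2def] using hi)
    simpa [Fin.append_right] using this
  -- case on where the strict coordinate lives
  refine Fin.addCases (motive := fun j =>
      Fin.append u.1 v.1 j < Fin.append u'.1 v'.1 j → False) ?_ ?_ j hj
  · intro i hi
    rw [Fin.append_left, Fin.append_left] at hi
    exact hSS1 u hu ⟨S1, hS1card, hS1mono, i, hi⟩
  · intro i hi
    rw [Fin.append_right, Fin.append_right] at hi
    by_cases huu' : u = u'
    · have hvv' : v.2 = v'.2 := by rw [← huv, huu', hjoin]
      exact hSN2 v hv hvv' ⟨S2, hS2card, hS2mono, i, hi⟩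
    · obtain ⟨T, hTsub, hTcard⟩ := Finset.exists_subset_card_eq hS1card
      obtain ⟨i0, hi0T, hi0ne⟩ := hUVP u hu u' hu' huu' T hTcard
      have hlt0 : u.1 i0 < u'.1 i0 := lt_of_le_of_ne (hS1mono i0 (hTsub hi0T)) hi0ne
      exact hSS1 u hu ⟨S1, hS1card, hS1mono, i0, hlt0⟩
end
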